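/- Let d be a positive integer, n an integer, and suppose α in the profinite completion N̂ of (ℕ,+) satisfies ω + n = d·α, where ω = lim k!. Then d divides n and α = ω + n/d. -/

import Mathlib

/-- The profinite completion `N̂` of `(ℕ,+)`, modelled as unary implicit operations on
finite monoids. -/
structure Nhat where
  F : ∀ (M : Type) [Monoid M] [Fintype M], M → M
  natural : ∀ {M N : Type} [Monoid M] [Fintype M] [Monoid N] [Fintype N]
      (f : M →* N) (x : M), f (F M x) = F N (f x)

/-- `d • α` in `N̂`. -/
def Nhat.nsmul (d : ℕ) (α : Nhat) : Nhat where
  F := fun M _ _ x => (α.F M x) ^ d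
  natural := by
    intro M N _ _ _ _ f x
    rw [map_pow, α.natural f x]

/-- `β = ω + n` where `ω = lim k!` and `n : ℤ` (for negative `n`, `ω + n` is the unique
element with `(ω + n) + (-n) = ω`): on a finite monoid of cardinality `c`, the element
`x^{ω+n}` equals `x^{(|n|+1)·c! + n}` (the exponent is a positive integer). -/
def Nhat.IsOmegaAdd (n : ℤ) (β : Nhat) : Prop :=
  ∀ (M : Type) [Monoid M] [Fintype M] (x : M),
    β.F M x = x ^ ((((n.natAbs + 1) * Nat.factorial (Fintype.card M) : ℕ) : ℤ) + n).toNat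

/-! By naturality, `α` acts on a finite monoid `M` as a power `x ↦ x ^ k`, with the same `k` on
`M` and on any product containing it. Testing `d • α = ω + n` on `M × ZMod (2 ^ P) × Multiplicative
(ZMod P)` with `P = d · |M|!`, where `2 ^ a = 0` iff `P ≤ a`, forces `|M|! ≤ k` and `d k ≡ n
(mod P)`. Hence `d ∣ n` and `k ≡ n / d (mod |M|!)`, and two powers of `x` whose exponents are at least
`|M|` and agree modulo `|M|!` coincide, by pigeonhole. -/

open Nat

section FiniteMonoid

variable {M : Type*} [Monoid M] [Fintype M]

/-- By pigeonhole two of `x ^ 0, …, x ^ c` coincide, so from exponent `c = card M` on the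
powers of `x` are periodic with a period `r ≤ c`, and `r ∣ c !`. -/
theorem pow_add_factorial_card {a : ℕ} (x : M) (ha : Fintype.card M ≤ a) :
    x ^ (a + (Fintype.card M)!) = x ^ a := by
  set c := Fintype.card M
  obtain ⟨i, j, hij, hpow⟩ := Fintype.exists_ne_map_eq_of_card_lt
    (fun j : Fin (c + 1) => x ^ (j : ℕ)) (by simp [c])
  wlog hlt : (i : ℕ) < j generalizing i j
  · exact this j i hij.symm hpow.symm (by omega)
  have hperiod : ∀ u, (i : ℕ) ≤ u → x ^ (u + (j - i)) = x ^ u := fun u hu => by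
    rw [show u + (j - i) = (u - i) + j by omega, pow_add, ← hpow, ← pow_add,
      Nat.sub_add_cancel hu]
  have hiterate : ∀ t, x ^ (a + t * (j - i)) = x ^ a := fun t => by
    induction t with
    | zero => simp
    | succ t ih => rw [add_mul, one_mul, ← add_assoc, hperiod _ (by omega), ih]
  obtain ⟨t, ht⟩ := Nat.dvd_factorial (by omega : 0 < (j : ℕ) - i) (by omega : (j : ℕ) - i ≤ c)
  rw [ht, mul_comm, hiterate]

theorem pow_eq_pow_of_modEq_factorial_card {a b : ℕ} (x : M) (ha : Fintype.card M ≤ a)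
    (hb : Fintype.card M ≤ b) (hab : a ≡ b [MOD (Fintype.card M)!]) : x ^ a = x ^ b := by
  have hshift : ∀ {u} t, Fintype.card M ≤ u → x ^ (u + t * (Fintype.card M)!) = x ^ u :=
    fun {u} t hu => by
      induction t with
      | zero => simp
      | succ t ih => rw [add_mul, one_mul, ← add_assoc, pow_add_factorial_card x (by omega), ih]
  wlog hle : a ≤ b generalizing a b
  · exact (this hb ha hab.symm (by omega)).symm
  obtain ⟨t, ht⟩ := (Nat.modEq_iff_dvd' hle).mp hab
  rw [← Nat.add_sub_cancel' hle, ht, mul_comm, hshift t ha]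

end FiniteMonoid

theorem ZMod.two_pow_eq_zero_iff {P a : ℕ} : (2 : ZMod (2 ^ P)) ^ a = 0 ↔ P ≤ a := by
  rw [show (2 : ZMod (2 ^ P)) ^ a = ((2 ^ a : ℕ) : ZMod (2 ^ P)) by push_cast; rfl,
    ZMod.natCast_eq_zero_iff, Nat.pow_dvd_pow_iff_le_right (by norm_num)]

theorem Multiplicative.ofAdd_one_pow_eq_iff {P a b : ℕ} :
    ofAdd (1 : ZMod P) ^ a = ofAdd (1 : ZMod P) ^ b ↔ a ≡ b [MOD P] := by
  rw [← ofAdd_nsmul, ← ofAdd_nsmul, nsmul_one, nsmul_one, EmbeddingLike.apply_eq_iff_eq,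
    ZMod.natCast_eq_natCast_iff]

def omegaAddExp (n : ℤ) (c : ℕ) : ℕ :=
  ((((n.natAbs + 1) * c ! : ℕ) : ℤ) + n).toNat

theorem omegaAddExp_cast (n : ℤ) (c : ℕ) :
    (omegaAddExp n c : ℤ) = (|n| + 1) * c ! + n := by
  have hc : (|n| + 1) * 1 ≤ (|n| + 1) * (c ! : ℤ) :=
    mul_le_mul_of_nonneg_left (by exact_mod_cast c.factorial_pos) (by positivity)
  rw [omegaAddExp, Int.toNat_of_nonneg] <;> push_cast
  · rfl
  · linarith [neg_abs_le n]

theorem factorial_le_omegaAddExp (n : ℤ) (c : ℕ) : c ! ≤ omegaAddExp n c := by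
  have hc : (|n| + 1) * (c ! : ℤ) = |n| * c ! + c ! := by ring
  have hn : |n| ≤ |n| * (c ! : ℤ) :=
    le_mul_of_one_le_right (abs_nonneg n) (by exact_mod_cast c.factorial_pos)
  zify
  rw [omegaAddExp_cast]
  linarith [neg_abs_le n]

theorem omegaAddExp_modEq {n : ℤ} {c q : ℕ} (hq : q ∣ c !) :
    (omegaAddExp n c : ℤ) ≡ n [ZMOD q] := by
  have hdvd : (q : ℤ) ∣ (|n| + 1) * c ! := dvd_mul_of_dvd_right (Int.natCast_dvd_natCast.2 hq) _
  simpa [omegaAddExp_cast] using (Int.modEq_zero_iff_dvd.2 hdvd).add_right n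

namespace Nhat

theorem isOmegaAdd_iff {n : ℤ} {β : Nhat} :
    IsOmegaAdd n β ↔ ∀ (M : Type) [Monoid M] [Fintype M] (x : M),
      β.F M x = x ^ omegaAddExp n (Fintype.card M) :=
  Iff.rfl

theorem exists_F_eq_pow (α : Nhat) {M : Type} [Monoid M] [Fintype M] (x : M) :
    ∃ k : ℕ, α.F M x = x ^ k := by
  let S := Submonoid.powers x
  let _ : Fintype S := Fintype.ofFinite S
  obtain ⟨k, hk⟩ := (α.F S ⟨x, Submonoid.mem_powers x⟩).2
  exact ⟨k, (α.natural S.subtype _).symm.trans hk.symm⟩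

theorem F_prod (α : Nhat) {M N : Type} [Monoid M] [Fintype M] [Monoid N] [Fintype N]
    (x : M) (y : N) : α.F (M × N) (x, y) = (α.F M x, α.F N y) :=
  Prod.ext (α.natural (MonoidHom.fst M N) (x, y)) (α.natural (MonoidHom.snd M N) (x, y))

theorem exists_F_eq_pow_of_nsmul_eq {d : ℕ} (hd : 0 < d) {n : ℤ} {α β : Nhat}
    (hβ : IsOmegaAdd n β) (h : nsmul d α = β) {M : Type} [Monoid M] [Fintype M] (x : M) :
    ∃ k : ℕ, α.F M x = x ^ k ∧ (Fintype.card M)! ≤ k ∧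
      (d * k : ℤ) ≡ n [ZMOD d * (Fintype.card M)!] := by
  set P := d * (Fintype.card M)!
  have : NeZero P := ⟨by positivity⟩
  let N := M × ZMod (2 ^ P) × Multiplicative (ZMod P)
  let y : N := (x, 2, Multiplicative.ofAdd 1)
  obtain ⟨k, hk⟩ := α.exists_F_eq_pow y
  have hpow : y ^ (k * d) = y ^ omegaAddExp n (Fintype.card N) := by
    rw [pow_mul, ← hk]
    exact (congrArg (fun γ : Nhat => γ.F N y) h).trans (hβ N y)
  have hindex := congrArg (fun z : N => z.2.1) hpow
  have hperiod := congrArg (fun z : N => z.2.2) hpow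
  simp only [N, y, Prod.pow_snd, Prod.pow_fst] at hindex hperiod
  have hcard : P ≤ Fintype.card N := by
    simp only [N, Fintype.card_prod, ZMod.card, Fintype.card_multiplicative]
    exact (Nat.le_mul_of_pos_left P (by positivity)).trans
      (Nat.le_mul_of_pos_left _ Fintype.card_pos)
  have hlarge : P ≤ omegaAddExp n (Fintype.card N) :=
    hcard.trans ((self_le_factorial _).trans (factorial_le_omegaAddExp _ _))
  refine ⟨k, ?_, ?_, ?_⟩
  · rw [F_prod] at hk
    exact (Prod.ext_iff.1 hk).1
  · rw [← ZMod.two_pow_eq_zero_iff, ← hindex, ZMod.two_pow_eq_zero_iff, mul_comm] at hlarge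
    exact Nat.le_of_mul_le_mul_left hlarge hd
  · have hmod := Int.natCast_modEq_iff.2 (Multiplicative.ofAdd_one_pow_eq_iff.1 hperiod)
    push_cast [mul_comm] at hmod
    exact hmod.trans (omegaAddExp_modEq (Nat.dvd_factorial (by positivity) hcard))

end Nhat

/-- If `d` is a positive integer, `n` an integer, and `α ∈ N̂` satisfies `ω + n = d·α`,
then `d` divides `n` and `α = ω + n/d`. -/
theorem omega_add_eq_nsmul (d : ℕ) (hd : 0 < d) (n : ℤ) (α β : Nhat)
    (hβ : Nhat.IsOmegaAdd n β) (h : Nhat.nsmul d α = β) :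
    (d : ℤ) ∣ n ∧ Nhat.IsOmegaAdd (n / d) α := by
  have hdvd : (d : ℤ) ∣ n := by
    obtain ⟨k, -, -, hk⟩ := Nhat.exists_F_eq_pow_of_nsmul_eq hd hβ h ()
    simp only [Fintype.card_unit, factorial_one, Nat.cast_one, mul_one] at hk
    simpa using hk.dvd.add (dvd_mul_right (d : ℤ) k)
  refine ⟨hdvd, Nhat.isOmegaAdd_iff.2 fun M _ _ x => ?_⟩
  obtain ⟨k, hk, hle, hmod⟩ := Nhat.exists_F_eq_pow_of_nsmul_eq hd hβ h x
  obtain ⟨m, rfl⟩ := hdvd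
  rw [Int.mul_ediv_cancel_left _ (by positivity), hk]
  refine pow_eq_pow_of_modEq_factorial_card x ((self_le_factorial _).trans hle)
    ((self_le_factorial _).trans (factorial_le_omegaAddExp _ _)) ?_
  rw [← Int.natCast_modEq_iff]
  exact (Int.ModEq.mul_left_cancel' (by positivity) hmod).trans (omegaAddExp_modEq dvd_rfl).symm
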